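/- Let K be a complete nonarchimedean field with absolute value |·|, and let p ∈ K with 0 < |p| < 1. Suppose a multivariate power series f = Σ_I a_I x^I in n variables over K satisfies: for every natural number k, |a_I| · |p|^{-k|I|} → 0 as |I| → ∞ (i.e. f converges on all of affine n-space), and there exists a constant C > 0 such that |a_I| · |p|^{-k|I|} ≤ C for all k ∈ ℕ and all multi-indices I. Then a_I = 0 for every multi-index I ≠ 0, i.e. f is constant. -/
import Mathlib


/-- An everywhere-convergent multivariate power series over a complete
nonarchimedean field whose coefficients satisfy a uniform bound
`‖a_I‖ / ‖p‖ ^ (k * |I|) ≤ C` for all `k` must have all nonconstant coefficients zero. -/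
theorem liouville_coefficients_zero
    {K : Type*} [NormedField K] [CompleteSpace K]
    (hna : ∀ x y : K, ‖x + y‖ ≤ max ‖x‖ ‖y‖)
    {n : ℕ} (p : K) (hp0 : 0 < ‖p‖) (hp1 : ‖p‖ < 1)
    (a : (Fin n → ℕ) → K)
    (hconv : ∀ k : ℕ, ∀ ε : ℝ, 0 < ε → ∃ N : ℕ, ∀ I : Fin n → ℕ,
      N ≤ ∑ i, I i → ‖a I‖ / ‖p‖ ^ (k * ∑ i, I i) < ε)
    (C : ℝ) (hC : 0 < C)
    (hbd : ∀ (k : ℕ) (I : Fin n → ℕ), ‖a I‖ / ‖p‖ ^ (k * ∑ i, I i) ≤ C) :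
    ∀ I : Fin n → ℕ, I ≠ 0 → a I = 0 := by
  intro I hI
  set d := ∑ i, I i with hd
  have hd1 : 1 ≤ d := by
    by_contra h
    push_neg at h
    interval_cases d
    · apply hI
      funext i
      have := Finset.sum_eq_zero_iff.mp hd.symm i (Finset.mem_univ i)
      simpa using this
  by_contra ha
  have hna : 0 < ‖a I‖ := norm_pos_iff.mpr ha
  -- choose k with C * ‖p‖ ^ k < ‖a I‖
  obtain ⟨k, hk⟩ : ∃ k : ℕ, ‖p‖ ^ k < ‖a I‖ / C := by
    have := exists_pow_lt_of_lt_one (div_pos hna hC) hp1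
    exact this
  have hbk := hbd k I
  rw [div_le_iff₀ (pow_pos hp0 _)] at hbk
  have hle : ‖p‖ ^ (k * d) ≤ ‖p‖ ^ k := by
    apply pow_le_pow_of_le_one (le_of_lt hp0) (le_of_lt hp1)
    nlinarith
  have : ‖a I‖ ≤ C * ‖p‖ ^ k := le_trans hbk (by nlinarith [pow_pos hp0 k, pow_pos hp0 (k*d)])
  have : ‖a I‖ < ‖a I‖ := by
    calc ‖a I‖ ≤ C * ‖p‖ ^ k := this
    _ < C * (‖a I‖ / C) := by exact (mul_lt_mul_iff_right₀ hC).mpr hk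
    _ = ‖a I‖ := by field_simp
  exact lt_irrefl _ this
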